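/- arXiv:2309.00834 — 5 statements merged into one kernel-verified Lean document; each statement's English description precedes it below -/
import Mathlib

section
/- Let C1, C2 be finite disjoint sets of points colored by two colors h1, h2, and define the balance of a set C as min(|col_{h1}(C)|/|col_{h2}(C)|, |col_{h2}(C)|/|col_{h1}(C)|). If both C1 and C2 have balance at least b ∈ [0,1] (with all color classes nonempty), then C1 ∪ C2 has balance at least b. -/
private lemma mediant_aux {b a1 b1 a2 b2 : ℝ} (hb1 : 0 < b1) (hb2 : 0 < b2)
    (h1 : b ≤ a1 / b1) (h2 : b ≤ a2 / b2) : b ≤ (a1 + a2) / (b1 + b2) := by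
  rw [le_div_iff₀ hb1] at h1
  rw [le_div_iff₀ hb2] at h2
  rw [le_div_iff₀ (by linarith)]
  nlinarith

theorem chierichetti_balance_mergeable {P H : Type*} [DecidableEq P] [DecidableEq H]
    (col : P → H) (h1 h2 : H) (C1 C2 : Finset P) (hdisj : Disjoint C1 C2) (b : ℝ)
    (hb0 : 0 ≤ b) (hb1 : b ≤ 1)
    (hne : ∀ C ∈ [C1, C2], (C.filter (fun p => col p = h1)).Nonempty ∧
      (C.filter (fun p => col p = h2)).Nonempty)
    (hbal : ∀ C ∈ [C1, C2],
      b ≤ min (((C.filter (fun p => col p = h1)).card : ℝ) / ((C.filter (fun p => col p = h2)).card : ℝ))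
              (((C.filter (fun p => col p = h2)).card : ℝ) / ((C.filter (fun p => col p = h1)).card : ℝ))) :
    b ≤ min ((((C1 ∪ C2).filter (fun p => col p = h1)).card : ℝ) / (((C1 ∪ C2).filter (fun p => col p = h2)).card : ℝ))
            ((((C1 ∪ C2).filter (fun p => col p = h2)).card : ℝ) / (((C1 ∪ C2).filter (fun p => col p = h1)).card : ℝ)) := by
  obtain ⟨hA1, hB1⟩ := hne C1 (by simp)
  obtain ⟨hA2, hB2⟩ := hne C2 (by simp)
  have hb1' := hbal C1 (by simp)
  have hb2' := hbal C2 (by simp)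
  have hdA : Disjoint (C1.filter (fun p => col p = h1)) (C2.filter (fun p => col p = h1)) :=
    hdisj.mono (Finset.filter_subset _ _) (Finset.filter_subset _ _)
  have hdB : Disjoint (C1.filter (fun p => col p = h2)) (C2.filter (fun p => col p = h2)) :=
    hdisj.mono (Finset.filter_subset _ _) (Finset.filter_subset _ _)
  have hcA : (((C1 ∪ C2).filter (fun p => col p = h1)).card : ℝ)
      = ((C1.filter (fun p => col p = h1)).card : ℝ) + ((C2.filter (fun p => col p = h1)).card : ℝ) := by
    rw [Finset.filter_union, Finset.card_union_of_disjoint hdA]; push_cast; ring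
  have hcB : (((C1 ∪ C2).filter (fun p => col p = h2)).card : ℝ)
      = ((C1.filter (fun p => col p = h2)).card : ℝ) + ((C2.filter (fun p => col p = h2)).card : ℝ) := by
    rw [Finset.filter_union, Finset.card_union_of_disjoint hdB]; push_cast; ring
  have pA1 : (0:ℝ) < (C1.filter (fun p => col p = h1)).card := by
    exact_mod_cast Finset.card_pos.mpr hA1
  have pA2 : (0:ℝ) < (C2.filter (fun p => col p = h1)).card := by
    exact_mod_cast Finset.card_pos.mpr hA2
  have pB1 : (0:ℝ) < (C1.filter (fun p => col p = h2)).card := by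
    exact_mod_cast Finset.card_pos.mpr hB1
  have pB2 : (0:ℝ) < (C2.filter (fun p => col p = h2)).card := by
    exact_mod_cast Finset.card_pos.mpr hB2
  rw [hcA, hcB]
  exact le_min
    (mediant_aux pB1 pB2 (hb1'.trans (min_le_left _ _)) (hb2'.trans (min_le_left _ _)))
    (mediant_aux pA1 pA2 (hb1'.trans (min_le_right _ _)) (hb2'.trans (min_le_right _ _)))
end

section
/- Let X be a finite set of points in ℝ^d with minimum enclosing ball B(c_old, r_old), and let B(c, r) be any ball containing X with r ≤ (1+ε)·r_old for some ε > 0. Then ‖c − c_old‖ ≤ √(ε(2+ε)) · r_old ≤ 2√ε · r_old. -/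
open RealInnerProductSpace

theorem approx_meb_center_close {d : ℕ} (X : Finset (EuclideanSpace ℝ (Fin d)))
    (hX : X.Nonempty) (c_old c : EuclideanSpace ℝ (Fin d)) (r_old r ε : ℝ)
    (hε : 0 < ε) (hε1 : ε < 1)
    -- `B(c_old, r_old)` is the minimum enclosing ball of `X`:
    (hmeb1 : ∀ x ∈ X, dist x c_old ≤ r_old)
    (hmeb2 : ∀ (c' : EuclideanSpace ℝ (Fin d)) (r' : ℝ), (∀ x ∈ X, dist x c' ≤ r') → r_old ≤ r')
    -- `B(c, r)` contains `X` and `r ≤ (1+ε) r_old`: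
    (hencl : ∀ x ∈ X, dist x c ≤ r) (hr : r ≤ (1 + ε) * r_old) :
    dist c c_old ≤ Real.sqrt (ε * (2 + ε)) * r_old ∧
      Real.sqrt (ε * (2 + ε)) * r_old ≤ 2 * Real.sqrt ε * r_old := by
  obtain ⟨x₀, hx₀⟩ := hX
  have hr_old0 : 0 ≤ r_old := le_trans dist_nonneg (hmeb1 x₀ hx₀)
  have hrnn : 0 ≤ r := le_trans dist_nonneg (hencl x₀ hx₀)
  constructor
  · -- main inequality
    suffices hsq : dist c c_old ^ 2 ≤ ε * (2 + ε) * r_old ^ 2 by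
      have h1 : dist c c_old = Real.sqrt (dist c c_old ^ 2) :=
        (Real.sqrt_sq dist_nonneg).symm
      rw [h1]
      calc Real.sqrt (dist c c_old ^ 2) ≤ Real.sqrt (ε * (2 + ε) * r_old ^ 2) :=
            Real.sqrt_le_sqrt hsq
        _ = Real.sqrt (ε * (2 + ε)) * r_old := by
            rw [Real.sqrt_mul (by positivity), Real.sqrt_sq hr_old0]
    by_contra hcon
    push_neg at hcon
    have hδpos : 0 < dist c c_old := by
      nlinarith [dist_nonneg (x := c) (y := c_old), sq_nonneg r_old,
        mul_nonneg (mul_nonneg hε.le (by linarith : (0:ℝ) ≤ 2 + ε)) (sq_nonneg r_old)]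
    have hr_old_pos : 0 < r_old := by
      rcases hr_old0.lt_or_eq with h' | h'
      · exact h'
      · exfalso
        have hx1 : x₀ = c_old := by
          have := hmeb1 x₀ hx₀; have := dist_nonneg (x := x₀) (y := c_old)
          have : dist x₀ c_old = 0 := by linarith
          exact dist_eq_zero.mp this
        have hx2 : x₀ = c := by
          have := hencl x₀ hx₀
          have : dist x₀ c = 0 := by
            have := dist_nonneg (x := x₀) (y := c); nlinarith
          exact dist_eq_zero.mp this
        rw [← hx2, ← hx1] at hδpos
        simp at hδpos
    set δ := dist c c_old with hδdef
    set u : EuclideanSpace ℝ (Fin d) := δ⁻¹ • (c - c_old) with hudef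
    have hnorm_cc : ‖c - c_old‖ = δ := (dist_eq_norm c c_old).symm
    have hu : ‖u‖ = 1 := by
      rw [hudef, norm_smul, hnorm_cc, norm_inv, Real.norm_eq_abs,
        abs_of_pos hδpos, inv_mul_cancel₀ hδpos.ne']
    have hc : c = c_old + δ • u := by
      rw [hudef, smul_smul, mul_inv_cancel₀ hδpos.ne', one_smul]
      abel
    have hexp : ∀ (x : EuclideanSpace ℝ (Fin d)) (s : ℝ),
        dist x (c_old + s • u) ^ 2 = ‖x - c_old‖ ^ 2 - 2 * s * ⟪x - c_old, u⟫ + s ^ 2 := by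
      intro x s
      rw [dist_eq_norm]
      have he : x - (c_old + s • u) = (x - c_old) - s • u := by abel
      rw [he, norm_sub_sq_real, real_inner_smul_right, norm_smul, Real.norm_eq_abs, hu,
        mul_one, sq_abs]
      ring
    have hpt : ∀ x ∈ X, ∃ tx, 0 < tx ∧
        ∀ t : ℝ, 0 < t → t ≤ tx → dist x (c_old + t • u) ^ 2 < r_old ^ 2 := by
      intro x hx
      set a := ⟪x - c_old, u⟫ with hadef
      have hxnorm : ‖x - c_old‖ ≤ r_old := by
        rw [← dist_eq_norm]; exact hmeb1 x hx
      have hCS : |a| ≤ ‖x - c_old‖ := by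
        calc |a| ≤ ‖x - c_old‖ * ‖u‖ := abs_real_inner_le_norm _ _
          _ = ‖x - c_old‖ := by rw [hu, mul_one]
      have hxnn : 0 ≤ ‖x - c_old‖ := norm_nonneg _
      rcases lt_or_ge 0 a with ha | ha
      · refine ⟨a, ha, fun t ht hta => ?_⟩
        rw [hexp]
        nlinarith
      · -- a ≤ 0
        have hxc2 : ‖x - c_old‖ ^ 2 ≤ r ^ 2 - δ ^ 2 + 2 * δ * a := by
          have h1 : dist x c ^ 2 = ‖x - c_old‖ ^ 2 - 2 * δ * a + δ ^ 2 := by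
            rw [hc]; exact hexp x δ
          have h2 : dist x c ≤ r := hencl x hx
          have h3 : dist x c ^ 2 ≤ r ^ 2 := by
            have := dist_nonneg (x := x) (y := c); nlinarith
          linarith
        have hg : 0 < r_old ^ 2 + δ ^ 2 - r ^ 2 := by nlinarith
        refine ⟨min r_old ((r_old ^ 2 + δ ^ 2 - r ^ 2) / (4 * r_old)), lt_min hr_old_pos (by positivity), fun t ht hta => ?_⟩
        have h1 : t ≤ r_old := le_trans hta (min_le_left _ _)
        have h2 : t * (4 * r_old) ≤ r_old ^ 2 + δ ^ 2 - r ^ 2 := by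
          have := le_trans hta (min_le_right _ _)
          exact (le_div_iff₀ (by positivity)).mp this
        have hna : -a ≤ r_old := by
          have := abs_le.mp hCS; linarith
        rw [hexp]
        nlinarith
    choose! tf htf1 htf2 using hpt
    set t := X.inf' ⟨x₀, hx₀⟩ tf with htdef
    have ht_pos : 0 < t := by
      rw [htdef]; refine (Finset.lt_inf'_iff ..).2 ?_
      exact fun x hx => htf1 x hx
    have ht_le : ∀ x ∈ X, t ≤ tf x := fun x hx => Finset.inf'_le _ hx
    have hall : ∀ x ∈ X, dist x (c_old + t • u) ≤
        X.sup' ⟨x₀, hx₀⟩ (fun x => dist x (c_old + t • u)) :=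
      fun x hx => Finset.le_sup' (fun x => dist x (c_old + t • u)) hx
    have hlt : X.sup' ⟨x₀, hx₀⟩ (fun x => dist x (c_old + t • u)) < r_old := by
      refine (Finset.sup'_lt_iff ..).2 ?_
      intro x hx
      exact lt_of_pow_lt_pow_left₀ 2 hr_old0 (htf2 x hx t ht_pos (ht_le x hx))
    have := hmeb2 _ _ hall
    linarith
  · -- second inequality
    have h4 : Real.sqrt (ε * (2 + ε)) ≤ 2 * Real.sqrt ε := by
      have : Real.sqrt (4 * ε) = 2 * Real.sqrt ε := by
        rw [show (4 : ℝ) = 2 ^ 2 by norm_num, Real.sqrt_mul (by positivity),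
          Real.sqrt_sq (by norm_num)]
      rw [← this]
      exact Real.sqrt_le_sqrt (by nlinarith)
    exact mul_le_mul_of_nonneg_right h4 hr_old0
end

section
/- Let x, c_old, c_new ∈ ℝ^d such that the angle at c_old in the triangle (x, c_old, c_new) is at least π/2 (i.e., ⟨x − c_old, c_new − c_old⟩ ≤ 0), with ‖x − c_old‖ = r and ‖c_new − c_old‖ ≥ (ε/2)·r for some 0 < ε < 1 and r > 0. Then ‖c_new − x‖ ≥ √(1 + ε²/4)·r ≥ (1 + ε²/16)·r. -/
theorem law_of_cosines_growth {d : ℕ} (x c_old c_new : EuclideanSpace ℝ (Fin d))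
    (ε r : ℝ) (hε : 0 < ε) (hε1 : ε < 1) (hr : 0 < r)
    (hangle : inner ℝ (x - c_old) (c_new - c_old) ≤ (0 : ℝ))
    (hx : ‖x - c_old‖ = r) (hmove : ε / 2 * r ≤ ‖c_new - c_old‖) :
    Real.sqrt (1 + ε ^ 2 / 4) * r ≤ ‖c_new - x‖ ∧
      (1 + ε ^ 2 / 16) * r ≤ Real.sqrt (1 + ε ^ 2 / 4) * r := by
  have hmove0 : 0 ≤ ε / 2 * r := by positivity
  have hsq : (1 + ε ^ 2 / 4) * r ^ 2 ≤ ‖c_new - x‖ ^ 2 := by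
    have key : ‖c_new - x‖ ^ 2 =
        ‖c_new - c_old‖ ^ 2 + ‖x - c_old‖ ^ 2
          - 2 * inner ℝ (x - c_old) (c_new - c_old) := by
      have h1 : c_new - x = (c_new - c_old) - (x - c_old) := by abel
      rw [h1, @norm_sub_sq_real]
      rw [real_inner_comm]
      ring
    have h2 : (ε / 2 * r) ^ 2 ≤ ‖c_new - c_old‖ ^ 2 := by
      exact pow_le_pow_left₀ hmove0 hmove 2
    nlinarith [hx]
  constructor
  · have h1 : Real.sqrt ((1 + ε ^ 2 / 4) * r ^ 2) ≤ Real.sqrt (‖c_new - x‖ ^ 2) :=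
      Real.sqrt_le_sqrt hsq
    rwa [Real.sqrt_mul (by positivity), Real.sqrt_sq hr.le,
      Real.sqrt_sq (norm_nonneg _)] at h1
  · have h : (1 + ε ^ 2 / 16) ≤ Real.sqrt (1 + ε ^ 2 / 4) := by
      rw [show (1 + ε ^ 2 / 4) = ((1 + ε^2/16))^2 + (ε^2/8 - ε^4/256) by ring]
      have hε2 : ε ^ 2 ≤ 1 := by nlinarith
      have : 0 ≤ ε^2/8 - ε^4/256 := by nlinarith [sq_nonneg ε, sq_nonneg (ε^2)]
      calc (1 + ε ^ 2 / 16) = Real.sqrt ((1 + ε^2/16)^2) := by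
            rw [Real.sqrt_sq (by positivity)]
        _ ≤ _ := Real.sqrt_le_sqrt (by linarith)
    exact mul_le_mul_of_nonneg_right h hr.le
end

section
/- Let P be a finite set in ℝ^d, and let B(c*, r*) and B(c, r) be balls with B(c, r) ⊆ B(c*, (1+ε)·r*). If two balls B(c*, r*) and B(c'*, r'*) satisfy B(c*, (1+ε)γ·r*) ∩ B(c'*, (1+ε)γ·r'*) = ∅ for some γ ≥ 1, then B(c, γ·r) ∩ B(c'*, (1+ε)γ·r'*) = ∅. -/
theorem dilation_stays_disjoint {d : ℕ} (cs c c' : EuclideanSpace ℝ (Fin d))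
    (rs r r' ε γ : ℝ) (hε : 0 ≤ ε) (hγ : 1 ≤ γ)
    (hr : 0 ≤ r) (hrs : 0 ≤ rs) (hr' : 0 ≤ r')
    (hsub : Metric.closedBall c r ⊆ Metric.closedBall cs ((1 + ε) * rs))
    (hdisj : Metric.closedBall cs ((1 + ε) * γ * rs) ∩ Metric.closedBall c' ((1 + ε) * γ * r') = ∅) :
    Metric.closedBall c (γ * r) ∩ Metric.closedBall c' ((1 + ε) * γ * r') = ∅ := by
  rcases Nat.eq_zero_or_pos d with hd | hd
  · subst hd
    exfalso
    have hcc : cs = c' := Subsingleton.elim _ _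
    have : cs ∈ Metric.closedBall cs ((1 + ε) * γ * rs) ∩
        Metric.closedBall c' ((1 + ε) * γ * r') := by
      constructor
      · exact Metric.mem_closedBall_self (by positivity)
      · rw [← hcc]; exact Metric.mem_closedBall_self (by positivity)
    rw [hdisj] at this
    exact this
  · -- key: dist c cs + r ≤ (1+ε) * rs
    have key : dist c cs + r ≤ (1 + ε) * rs := by
      by_cases hcs : c = cs
      · subst hcs
        simp only [dist_self, zero_add]
        set u : EuclideanSpace ℝ (Fin d) := EuclideanSpace.single ⟨0, hd⟩ (1 : ℝ) with hu
        have hun : ‖u‖ = 1 := by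
          rw [hu, EuclideanSpace.norm_single, norm_one]
        have hp : c + r • u ∈ Metric.closedBall c r := by
          rw [Metric.mem_closedBall, dist_eq_norm]
          simp [norm_smul, hun, abs_of_nonneg hr]
        have := hsub hp
        rw [Metric.mem_closedBall, dist_eq_norm] at this
        simpa [norm_smul, hun, abs_of_nonneg hr] using this
      · have hn : 0 < ‖c - cs‖ := by
          rw [norm_pos_iff, sub_ne_zero]; exact hcs
        set p : EuclideanSpace ℝ (Fin d) := c + (r / ‖c - cs‖) • (c - cs) with hp
        have hpc : p ∈ Metric.closedBall c r := by
          rw [Metric.mem_closedBall, dist_eq_norm]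
          simp only [hp, add_sub_cancel_left, norm_smul]
          rw [Real.norm_of_nonneg (by positivity)]
          field_simp
          exact le_rfl
        have := hsub hpc
        rw [Metric.mem_closedBall, dist_eq_norm] at this
        have hps : p - cs = (1 + r / ‖c - cs‖) • (c - cs) := by
          rw [hp]; module
        rw [hps, norm_smul, Real.norm_of_nonneg (by positivity)] at this
        have heq : (1 + r / ‖c - cs‖) * ‖c - cs‖ = ‖c - cs‖ + r := by
          field_simp
        rw [heq] at this
        rw [dist_eq_norm]
        linarith
    have hrle : r ≤ (1 + ε) * rs := by
      have := dist_nonneg (x := c) (y := cs); linarith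
    rw [Set.eq_empty_iff_forall_notMem] at hdisj ⊢
    intro x ⟨hx1, hx2⟩
    refine hdisj x ⟨?_, hx2⟩
    rw [Metric.mem_closedBall] at hx1 ⊢
    have htri : dist x cs ≤ dist x c + dist c cs := dist_triangle x c cs
    nlinarith [dist_nonneg (x := c) (y := cs)]
end

section
/- Let X ⊆ ℝ^d be finite with minimum enclosing ball B(c, r), r > 0. Then every open halfspace whose bounding hyperplane passes through c contains no point of X at distance greater than r from c, but every closed halfspace {y : ⟨y − c, v⟩ ≤ 0} (for any unit vector v) contains a point x ∈ X with ‖x − c‖ = r. -/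
theorem meb_boundary_points {d : ℕ} (X : Finset (EuclideanSpace ℝ (Fin d)))
    (hX : X.Nonempty) (c : EuclideanSpace ℝ (Fin d)) (r : ℝ) (hr : 0 < r)
    -- `B(c, r)` is the minimum enclosing ball of `X`:
    (hmeb1 : ∀ x ∈ X, dist x c ≤ r)
    (hmeb2 : ∀ (c' : EuclideanSpace ℝ (Fin d)) (r' : ℝ), (∀ x ∈ X, dist x c' ≤ r') → r ≤ r') :
    (∀ x ∈ X, ¬ r < dist x c) ∧
      ∀ v : EuclideanSpace ℝ (Fin d), ‖v‖ = 1 →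
        ∃ x ∈ X, inner ℝ (x - c) v ≤ (0 : ℝ) ∧ ‖x - c‖ = r := by
  constructor
  · intro x hx h
    exact absurd (hmeb1 x hx) (not_le.mpr h)
  · intro v hv
    by_contra hcon
    push_neg at hcon
    have key : ∀ x ∈ X, ∃ e, 0 < e ∧ ∀ ε : ℝ, 0 < ε → ε ≤ e → dist x (c + ε • v) < r := by
      intro x hx
      rcases le_or_gt ((inner ℝ (x - c) v : ℝ)) 0 with h | h
      · have hne : ‖x - c‖ ≠ r := hcon x hx h
        have hle : ‖x - c‖ ≤ r := by simpa [dist_eq_norm] using hmeb1 x hx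
        have hlt : ‖x - c‖ < r := lt_of_le_of_ne hle hne
        refine ⟨(r - ‖x - c‖) / 2, by linarith, fun ε hε hε' => ?_⟩
        have h1 : dist x (c + ε • v) ≤ dist x c + dist c (c + ε • v) := dist_triangle _ _ _
        have h2 : dist c (c + ε • v) = ε := by
          simp [dist_eq_norm, norm_smul, abs_of_pos hε, hv]
        have h3 : dist x c = ‖x - c‖ := dist_eq_norm _ _
        rw [h2, h3] at h1
        linarith
      · refine ⟨(inner ℝ (x - c) v : ℝ), h, fun ε hε hε' => ?_⟩
        have hexp : ‖x - (c + ε • v)‖ ^ 2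
            = ‖x - c‖ ^ 2 - 2 * (ε * (inner ℝ (x - c) v : ℝ)) + ε ^ 2 := by
          have : x - (c + ε • v) = (x - c) - ε • v := by abel
          rw [this, norm_sub_sq_real, norm_smul, real_inner_smul_right]
          simp [hv, abs_of_pos hε]
        have hle : ‖x - c‖ ≤ r := by simpa [dist_eq_norm] using hmeb1 x hx
        have hε2 : ε ^ 2 ≤ ε * (inner ℝ (x - c) v : ℝ) := by
          have := mul_le_mul_of_nonneg_left hε' hε.le
          nlinarith
        have hsq : ‖x - (c + ε • v)‖ ^ 2 < r ^ 2 := by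
          have h0 : 0 ≤ ‖x - c‖ := norm_nonneg _
          nlinarith
        have : ‖x - (c + ε • v)‖ < r := lt_of_pow_lt_pow_left₀ 2 hr.le hsq
        simpa [dist_eq_norm] using this
    choose! e he1 he2 using key
    set ε := X.inf' hX e with hεdef
    have hε0 : 0 < ε := by
      rw [hεdef, Finset.lt_inf'_iff]
      exact fun x hx => he1 x hx
    set c' := c + ε • v with hc'
    have hall : ∀ x ∈ X, dist x c' < r := fun x hx =>
      he2 x hx ε hε0 (Finset.inf'_le e hx)
    set r' := X.sup' hX (fun x => dist x c') with hr'
    have h1 : r ≤ r' := hmeb2 c' r' (fun x hx => Finset.le_sup' (fun y => dist y c') hx)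
    have h2 : r' < r := by
      rw [hr', Finset.sup'_lt_iff]
      exact hall
    linarith
end
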